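/- The graph of the pruning map ⌊-⌋ on skip-free GKAT expressions is a bisimulation of skip-free automata between (GExp⁻, ⌊∂⌋) and (GExp⁻, ∂); equivalently, ∂(⌊e⌋)(α) equals the image under ⌊-⌋ of ⌊∂⌋(e)(α) for all e and α. -/
import Mathlib


variable {At : Type} {Act : Type} {X : Type} {Y : Type} {Z : Type}

/-- Skip-free GKAT expressions; tests are represented as Boolean predicates on atoms. -/
inductive GExp (At Act : Type) : Type
  | zero : GExp At Act
  | act : Act → GExp At Act
  | add : (At → Bool) → GExp At Act → GExp At Act → GExp At Act
  | seq : GExp At Act → GExp At Act → GExp At Act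
  | loop : (At → Bool) → GExp At Act → GExp At Act → GExp At Act

/-- The Brzozowski-style small-step semantics (derivative) of skip-free GKAT expressions.
`none` is the failure output ⊥, `some (p, none)` is acceptance with action `p`,
and `some (p, some e')` is a transition to `e'` with action `p`. -/
def gderiv : GExp At Act → At → Option (Act × Option (GExp At Act))
  | .zero, _ => none
  | .act p, _ => some (p, none)
  | .add b e f, α => if b α then gderiv e α else gderiv f α
  | .seq e f, α =>
      match gderiv e α with
      | none => none
      | some (p, none) => some (p, some f)
      | some (p, some e') => some (p, some (.seq e' f))
  | .loop b e f, α =>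
      if b α then
        match gderiv e α with
        | none => none
        | some (p, none) => some (p, some (.loop b e f))
        | some (p, some e') => some (p, some (.seq e' (.loop b e f)))
      else gderiv f α

/-- A skip-free automaton structure on `X`. -/
abbrev SFA (At Act X : Type) := X → At → Option (Act × Option X)

/-- Acceptance of a guarded trace (a nonempty list of atom/action pairs) from a state. -/
inductive Accepts (h : SFA At Act X) : X → List (At × Act) → Prop
  | last {x α p} : h x α = some (p, none) → Accepts h x [(α, p)]
  | step {x α p x' w} : h x α = some (p, some x') → Accepts h x' w →
      Accepts h x ((α, p) :: w)

/-- The language of guarded traces accepted by a state of a skip-free automaton. -/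
def Lang (h : SFA At Act X) (x : X) : Set (List (At × Act)) := {w | Accepts h x w}

/-- Bisimulations between skip-free automata. -/
def IsSFBisim (h : SFA At Act X) (k : SFA At Act Y) (R : X → Y → Prop) : Prop :=
  ∀ ⦃x y⦄, R x y → ∀ α : At,
    (h x α = none ↔ k y α = none) ∧
    (∀ p : Act, h x α = some (p, none) ↔ k y α = some (p, none)) ∧
    (∀ (p : Act) (x' : X), h x α = some (p, some x') →
      ∃ y' : Y, k y α = some (p, some y') ∧ R x' y')

/-- Bisimilarity of states of skip-free automata. -/
def SFBisimilar (h : SFA At Act X) (k : SFA At Act Y) (x : X) (y : Y) : Prop :=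
  ∃ R, IsSFBisim h k R ∧ R x y

/-- A state of a skip-free automaton is dead if it belongs to some set of states closed
under transitions and containing no accepting transitions (the largest such set). -/
def Dead (h : SFA At Act X) (x : X) : Prop :=
  ∃ D : Set X, x ∈ D ∧ ∀ y ∈ D, ∀ α : At,
    h y α = none ∨ ∃ (p : Act) (y' : X), h y α = some (p, some y') ∧ y' ∈ D

open scoped Classical in
/-- Pruning of a skip-free automaton: transitions into dead states are redirected to ⊥. -/
noncomputable def prune (h : SFA At Act X) : SFA At Act X :=
  fun x α =>
    match h x α with
    | some (p, some x') => if Dead h x' then none else some (p, some x')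
    | o => o

/-- An expression is dead when it is a dead state of the syntactic skip-free automaton. -/
def DeadE (e : GExp At Act) : Prop := Dead gderiv e

open scoped Classical in
/-- Syntactic pruning of skip-free GKAT expressions. -/
noncomputable def floorE : GExp At Act → GExp At Act
  | .zero => .zero
  | .act p => .act p
  | .add b e f => .add b (floorE e) (floorE f)
  | .seq e f => if DeadE f then .zero else .seq (floorE e) (floorE f)
  | .loop b e f =>
      if DeadE (.add (fun α => !b α) f .zero) then .zero
      else .loop b (floorE e) (floorE f)

section Aux

lemma accepts_not_mem_dead {h : SFA At Act X} {x : X} {w : List (At × Act)}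
    (ha : Accepts h x w) :
    ∀ D : Set X,
      (∀ y ∈ D, ∀ α : At, h y α = none ∨
        ∃ (p : Act) (y' : X), h y α = some (p, some y') ∧ y' ∈ D) →
      x ∉ D := by
  induction ha with
  | @last x α p hx =>
    intro D hD hxD
    rcases hD x hxD α with h0 | ⟨q, y', hy', _⟩ <;> simp_all
  | @step x α p x' w hx _ ih =>
    intro D hD hxD
    rcases hD x hxD α with h0 | ⟨q, y', hy', hy'D⟩
    · simp_all
    · rw [hx] at hy'
      obtain ⟨rfl, rfl⟩ : q = p ∧ y' = x' := by
        constructor <;> injection hy' with h1 <;> simp_all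
      exact ih D hD hy'D

lemma dead_iff_no_accepts {h : SFA At Act X} {x : X} :
    Dead h x ↔ ∀ w, ¬ Accepts h x w := by
  constructor
  · rintro ⟨D, hxD, hD⟩ w ha
    exact accepts_not_mem_dead ha D hD hxD
  · intro hn
    refine ⟨{y | ∀ w, ¬ Accepts h y w}, hn, ?_⟩
    intro y hy α
    cases hyα : h y α with
    | none => exact Or.inl rfl
    | some v =>
      obtain ⟨p, o⟩ := v
      cases o with
      | none => exact absurd (Accepts.last hyα) (hy _)
      | some y' =>
        exact Or.inr ⟨p, y', rfl, fun w hw => hy _ (Accepts.step hyα hw)⟩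

lemma deadE_seq_right {f : GExp At Act} (hf : DeadE f) (e : GExp At Act) :
    DeadE (.seq e f) := by
  obtain ⟨D, hfD, hD⟩ := hf
  refine ⟨D ∪ {g | ∃ x, g = .seq x f}, Or.inr ⟨e, rfl⟩, ?_⟩
  rintro y (hy | ⟨x, rfl⟩) α
  · rcases hD y hy α with h0 | ⟨p, y', h1, h2⟩
    · exact Or.inl h0
    · exact Or.inr ⟨p, y', h1, Or.inl h2⟩
  · cases hx : gderiv x α with
    | none => exact Or.inl (by simp [gderiv, hx])
    | some v =>
      obtain ⟨p, o⟩ := v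
      cases o with
      | none => exact Or.inr ⟨p, f, by simp [gderiv, hx], Or.inl hfD⟩
      | some x' => exact Or.inr ⟨p, .seq x' f, by simp [gderiv, hx], Or.inr ⟨x', rfl⟩⟩

lemma deadE_seq_left {e : GExp At Act} (he : DeadE e) (f : GExp At Act) :
    DeadE (.seq e f) := by
  obtain ⟨D, heD, hD⟩ := he
  refine ⟨{g | ∃ x ∈ D, g = .seq x f}, ⟨e, heD, rfl⟩, ?_⟩
  rintro y ⟨x, hxD, rfl⟩ α
  rcases hD x hxD α with h0 | ⟨p, x', h1, h2⟩
  · exact Or.inl (by simp [gderiv, h0])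
  · exact Or.inr ⟨p, .seq x' f, by simp [gderiv, h1], ⟨x', h2, rfl⟩⟩

lemma deadE_loop {b : At → Bool} {e f : GExp At Act}
    (hf : DeadE (.add (fun α => !b α) f .zero)) : DeadE (.loop b e f) := by
  obtain ⟨D, hfD, hD⟩ := hf
  refine ⟨D ∪ {GExp.loop b e f} ∪ {g | ∃ x, g = .seq x (.loop b e f)}, Or.inl (Or.inr rfl), ?_⟩
  rintro y ((hy | rfl) | ⟨x, rfl⟩) α
  · rcases hD y hy α with h0 | ⟨p, y', h1, h2⟩
    · exact Or.inl h0
    · exact Or.inr ⟨p, y', h1, Or.inl (Or.inl h2)⟩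
  · by_cases hb : b α
    · cases hx : gderiv e α with
      | none => exact Or.inl (by simp [gderiv, hb, hx])
      | some v =>
        obtain ⟨p, o⟩ := v
        cases o with
        | none =>
          exact Or.inr ⟨p, .loop b e f, by simp [gderiv, hb, hx], Or.inl (Or.inr rfl)⟩
        | some e' =>
          exact Or.inr ⟨p, .seq e' (.loop b e f), by simp [gderiv, hb, hx],
            Or.inr ⟨e', rfl⟩⟩
    · have hadd : gderiv (GExp.add (fun α => !b α) f .zero) α = gderiv f α := by
        simp [gderiv, hb]
      have hloop : gderiv (GExp.loop b e f) α = gderiv f α := by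
        simp [gderiv, hb]
      rcases hD _ hfD α with h0 | ⟨p, y', h1, h2⟩
      · exact Or.inl (by rw [hloop, ← hadd]; exact h0)
      · exact Or.inr ⟨p, y', by rw [hloop, ← hadd]; exact h1, Or.inl (Or.inl h2)⟩
  · cases hx : gderiv x α with
    | none => exact Or.inl (by simp [gderiv, hx])
    | some v =>
      obtain ⟨p, o⟩ := v
      cases o with
      | none =>
        exact Or.inr ⟨p, .loop b e f, by simp [gderiv, hx], Or.inl (Or.inr rfl)⟩
      | some x' =>
        exact Or.inr ⟨p, .seq x' (.loop b e f), by simp [gderiv, hx], Or.inr ⟨x', rfl⟩⟩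

lemma accepts_seq {e f : GExp At Act} {w v : List (At × Act)}
    (he : Accepts gderiv e w) (hf : Accepts gderiv f v) :
    Accepts gderiv (GExp.seq e f) (w ++ v) := by
  induction he with
  | @last x α p hx =>
    exact Accepts.step (by simp [gderiv, hx]) hf
  | @step x α p x' w hx _ ih =>
    exact Accepts.step (x' := GExp.seq x' f) (by simp [gderiv, hx]) ih

lemma accepts_loop_of_add {b : At → Bool} {e f : GExp At Act} {v : List (At × Act)}
    (hv : Accepts gderiv (GExp.add (fun α => !b α) f .zero) v) :
    Accepts gderiv (GExp.loop b e f) v := by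
  cases hv with
  | @last x α p hx =>
    by_cases hb : b α
    · simp [gderiv, hb] at hx
    · simp only [gderiv, Bool.not_eq_true', hb, if_true, Bool.not_false] at hx
      exact Accepts.last (by simp [gderiv, hb]; simpa using hx)
  | @step x α p x' w hx hw =>
    by_cases hb : b α
    · simp [gderiv, hb] at hx
    · refine Accepts.step (x' := x') ?_ hw
      simp only [gderiv, Bool.not_eq_true', hb, if_true, Bool.not_false] at hx ⊢
      simpa using hx

lemma not_deadE_seq {e f : GExp At Act} (he : ¬ DeadE e) (hf : ¬ DeadE f) :
    ¬ DeadE (.seq e f) := by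
  rw [DeadE, dead_iff_no_accepts] at he hf ⊢
  push_neg at he hf ⊢
  obtain ⟨w, hw⟩ := he
  obtain ⟨v, hv⟩ := hf
  exact ⟨w ++ v, accepts_seq hw hv⟩

lemma not_deadE_loop {b : At → Bool} {e f : GExp At Act}
    (hf : ¬ DeadE (.add (fun α => !b α) f .zero)) : ¬ DeadE (.loop b e f) := by
  rw [DeadE, dead_iff_no_accepts] at hf ⊢
  push_neg at hf ⊢
  obtain ⟨v, hv⟩ := hf
  exact ⟨v, accepts_loop_of_add hv⟩

lemma prune_congr {x y : X} {α : At} {h : SFA At Act X}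
    (hxy : h x α = h y α) : prune h x α = prune h y α := by
  unfold prune; rw [hxy]

lemma gderiv_floorE (e : GExp At Act) (α : At) :
    gderiv (floorE e) α
      = Option.map (Prod.map id (Option.map floorE)) (prune gderiv e α) := by
  induction e with
  | zero => simp [floorE, gderiv, prune]
  | act p => simp [floorE, gderiv, prune]
  | add b e f ihe ihf =>
    by_cases hb : b α
    · have h1 : gderiv (GExp.add b e f) α = gderiv e α := by simp [gderiv, hb]
      rw [prune_congr h1]
      simpa [floorE, gderiv, hb] using ihe
    · have h1 : gderiv (GExp.add b e f) α = gderiv f α := by simp [gderiv, hb]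
      rw [prune_congr h1]
      simpa [floorE, gderiv, hb] using ihf
  | seq e f ihe ihf =>
    by_cases hf : DeadE f
    · rw [show floorE (GExp.seq e f) = .zero by simp [floorE, hf]]
      cases he : gderiv e α with
      | none => simp [gderiv, prune, he]
      | some v =>
        obtain ⟨p, o⟩ := v
        cases o with
        | none => simp [gderiv, prune, he, show Dead gderiv f from hf]
        | some e' =>
          simp [gderiv, prune, he,
            show Dead gderiv (GExp.seq e' f) from deadE_seq_right hf e']
    · rw [show floorE (GExp.seq e f) = .seq (floorE e) (floorE f) by simp [floorE, hf]]
      cases he : gderiv e α with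
      | none =>
        have h1 : gderiv (floorE e) α = none := by simp [ihe, prune, he]
        simp [gderiv, prune, he, h1]
      | some v =>
        obtain ⟨p, o⟩ := v
        cases o with
        | none =>
          have h1 : gderiv (floorE e) α = some (p, none) := by simp [ihe, prune, he]
          simp [gderiv, prune, he, h1, show ¬ Dead gderiv f from hf]
        | some e' =>
          by_cases he' : DeadE e'
          · have h1 : gderiv (floorE e) α = none := by
              simp [ihe, prune, he, show Dead gderiv e' from he']
            simp [gderiv, prune, he, h1,
              show Dead gderiv (GExp.seq e' f) from deadE_seq_left he' f]
          · have h1 : gderiv (floorE e) α = some (p, some (floorE e')) := by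
              simp [ihe, prune, he, show ¬ Dead gderiv e' from he']
            simp [gderiv, prune, he, h1,
              show ¬ Dead gderiv (GExp.seq e' f) from not_deadE_seq he' hf,
              floorE, hf]
  | loop b e f ihe ihf =>
    by_cases hc : DeadE (GExp.add (fun α => !b α) f .zero)
    · rw [show floorE (GExp.loop b e f) = .zero by simp [floorE, hc]]
      by_cases hb : b α
      · cases he : gderiv e α with
        | none => simp [gderiv, prune, hb, he]
        | some v =>
          obtain ⟨p, o⟩ := v
          cases o with
          | none =>
            simp [gderiv, prune, hb, he,
              show Dead gderiv (GExp.loop b e f) from deadE_loop hc]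
          | some e' =>
            simp [gderiv, prune, hb, he,
              show Dead gderiv (GExp.seq e' (GExp.loop b e f)) from
                deadE_seq_right (deadE_loop hc) e']
      · have h1 : gderiv (GExp.loop b e f) α = gderiv (GExp.add (fun α => !b α) f .zero) α := by
          simp [gderiv, hb]
        rw [prune_congr h1]
        obtain ⟨D, hfD, hD⟩ := hc
        rcases hD _ hfD α with h0 | ⟨p, y', h1', h2⟩
        · simp [gderiv, hb] at h0
          simp [gderiv, prune, hb, h0]
        · have hy' : Dead gderiv y' := ⟨D, h2, hD⟩
          simp [gderiv, hb] at h1'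
          simp [gderiv, prune, hb, h1', hy']
    · rw [show floorE (GExp.loop b e f) = .loop b (floorE e) (floorE f) by simp [floorE, hc]]
      by_cases hb : b α
      · cases he : gderiv e α with
        | none =>
          have h1 : gderiv (floorE e) α = none := by simp [ihe, prune, he]
          simp [gderiv, prune, hb, he, h1]
        | some v =>
          obtain ⟨p, o⟩ := v
          cases o with
          | none =>
            have h1 : gderiv (floorE e) α = some (p, none) := by simp [ihe, prune, he]
            simp [gderiv, prune, hb, he, h1,
              show ¬ Dead gderiv (GExp.loop b e f) from not_deadE_loop hc,
              floorE, hc]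
          | some e' =>
            by_cases he' : DeadE e'
            · have h1 : gderiv (floorE e) α = none := by
                simp [ihe, prune, he, show Dead gderiv e' from he']
              simp [gderiv, prune, hb, he, h1,
                show Dead gderiv (GExp.seq e' (GExp.loop b e f)) from
                  deadE_seq_left he' _]
            · have h1 : gderiv (floorE e) α = some (p, some (floorE e')) := by
                simp [ihe, prune, he, show ¬ Dead gderiv e' from he']
              simp [gderiv, prune, hb, he, h1,
                show ¬ Dead gderiv (GExp.seq e' (GExp.loop b e f)) from
                  not_deadE_seq he' (not_deadE_loop hc),
                floorE, hc, show ¬ DeadE (GExp.loop b e f) from not_deadE_loop hc]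
      · have h1 : gderiv (GExp.loop b e f) α = gderiv f α := by simp [gderiv, hb]
        rw [prune_congr h1]
        simpa [gderiv, hb] using ihf

end Aux

/-- the graph of the pruning map `⌊-⌋` is a bisimulation of skip-free
automata between `(GExp⁻, ⌊∂⌋)` and `(GExp⁻, ∂)`. -/
theorem floor_graph_bisim :
    IsSFBisim (prune (gderiv (At := At) (Act := Act))) gderiv
      (fun e f => f = floorE e) := by
  rintro e f rfl α
  have key := gderiv_floorE e α
  refine ⟨?_, ?_, ?_⟩
  · rw [key]; cases prune gderiv e α <;> simp
  · intro p
    rw [key]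
    cases hpe : prune gderiv e α with
    | none => simp
    | some v => obtain ⟨q, o⟩ := v; cases o <;> simp
  · intro p x' hx
    exact ⟨floorE x', by rw [key, hx]; rfl, rfl⟩
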